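/- Let t ∈ [0,1] and w ∈ ℂ. There exists ε > 0 such that for all complex z with |z| < ε, the series Σ_{k≥1} P_k^{(t)}(w) z^k/k converges and exp( − Σ_{k≥1} P_k^{(t)}(w) z^k / k ) = 1 + t z² − z w. -/

import Mathlib

open Polynomial Filter Topology

/-- The modified Chebyshev polynomials in `ℂ[X]` for a real parameter `t`:
`P₀ = 2`, `P₁ = X`, `P_{k+2} = X·P_{k+1} − t·P_k`. -/
noncomputable def modCheb (t : ℝ) : ℕ → Polynomial ℂ
  | 0 => 2
  | 1 => Polynomial.X
  | (k + 2) => Polynomial.X * modCheb t (k + 1) - Polynomial.C (t : ℂ) * modCheb t k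

/-!
Factor `1 + t z² − z w = (1 − a z)(1 − b z)` with `a + b = w`, `a b = t`. Then
`P_k^{(t)}(w) = a^k + b^k` (both sides satisfy the same recurrence), so the series is the sum of
the logarithmic series `Σ (a z)^k / k = −log (1 − a z)` and its analogue for `b`, which converge
for `z` near `0`; exponentiating gives the product back.
-/

theorem exists_add_eq_and_mul_eq {K : Type*} [Field K] [IsAlgClosed K] [NeZero (2 : K)]
    (w c : K) : ∃ a b : K, a + b = w ∧ a * b = c := by
  obtain ⟨s, hs⟩ := IsAlgClosed.exists_eq_mul_self (w ^ 2 - 4 * c)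
  have h2 : (2 : K) ≠ 0 := two_ne_zero
  refine ⟨(w + s) / 2, (w - s) / 2, by field_simp; ring, ?_⟩
  field_simp
  linear_combination hs

theorem modCheb_eval_add {t : ℝ} {a b : ℂ} (hab : a * b = t) :
    ∀ k, (modCheb t k).eval (a + b) = a ^ k + b ^ k
  | 0 => by norm_num [modCheb]
  | 1 => by simp [modCheb]
  | k + 2 => by
    simp only [modCheb, eval_sub, eval_mul, eval_X, eval_C, modCheb_eval_add hab k,
      modCheb_eval_add hab (k + 1), ← hab]
    ring

theorem Complex.hasSum_pow_succ_div_neg_log {x : ℂ} (hx : ‖x‖ < 1) :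
    HasSum (fun k : ℕ => x ^ (k + 1) / (k + 1)) (-Complex.log (1 - x)) := by
  have h := (hasSum_nat_add_iff' 1).2 (Complex.hasSum_taylorSeries_neg_log hx)
  simpa using h

theorem eventually_norm_mul_lt_one {R : Type*} [NormedRing R] (a : R) :
    ∀ᶠ z in 𝓝 (0 : R), ‖a * z‖ < 1 := by
  have h : Tendsto (fun z => ‖a * z‖) (𝓝 0) (𝓝 ‖a * 0‖) :=
    (continuous_const.mul continuous_id).norm.tendsto 0
  exact h.eventually (gt_mem_nhds (by simp))

theorem hasSum_modCheb_eval_add {t : ℝ} {a b z : ℂ} (hab : a * b = t)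
    (ha : ‖a * z‖ < 1) (hb : ‖b * z‖ < 1) :
    HasSum (fun k : ℕ => (modCheb t (k + 1)).eval (a + b) * z ^ (k + 1) / (k + 1))
      (-Complex.log (1 - a * z) + -Complex.log (1 - b * z)) := by
  convert (Complex.hasSum_pow_succ_div_neg_log ha).add
    (Complex.hasSum_pow_succ_div_neg_log hb) using 2 with k
  rw [modCheb_eval_add hab, mul_pow, mul_pow]
  ring

theorem Complex.exp_log_one_sub {x : ℂ} (hx : ‖x‖ < 1) :
    Complex.exp (Complex.log (1 - x)) = 1 - x :=
  Complex.exp_log <| sub_ne_zero.2 fun h => by simp [← h] at hx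

theorem stmt_9_general (t : ℝ) (w : ℂ) :
    ∃ ε > (0 : ℝ), ∀ z : ℂ, ‖z‖ < ε →
      Summable (fun k : ℕ => (modCheb t (k + 1)).eval w * z ^ (k + 1) / (k + 1)) ∧
      Complex.exp (-∑' k : ℕ, (modCheb t (k + 1)).eval w * z ^ (k + 1) / (k + 1))
        = 1 + (t : ℂ) * z ^ 2 - z * w := by
  obtain ⟨a, b, rfl, hab⟩ := exists_add_eq_and_mul_eq w (t : ℂ)
  obtain ⟨ε, hε, hsmall⟩ := Metric.eventually_nhds_iff.1
    ((eventually_norm_mul_lt_one a).and (eventually_norm_mul_lt_one b))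
  refine ⟨ε, hε, fun z hz => ?_⟩
  obtain ⟨ha, hb⟩ := hsmall (by rwa [dist_zero_right])
  have hsum := hasSum_modCheb_eval_add hab ha hb
  refine ⟨hsum.summable, ?_⟩
  rw [hsum.tsum_eq, neg_add, Complex.exp_add, neg_neg, neg_neg,
    Complex.exp_log_one_sub ha, Complex.exp_log_one_sub hb]
  linear_combination z ^ 2 * hab

/-- For `t ∈ [0,1]` and `w ∈ ℂ`, there is `ε > 0` such that for `|z| < ε` the series
`Σ_{k≥1} P_k^{(t)}(w) z^k/k` converges and
`exp(−Σ_{k≥1} P_k^{(t)}(w) z^k/k) = 1 + t z² − z w`. -/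
theorem stmt_9 (t : ℝ) (ht0 : 0 ≤ t) (ht1 : t ≤ 1) (w : ℂ) :
    ∃ ε > (0 : ℝ), ∀ z : ℂ, ‖z‖ < ε →
      Summable (fun k : ℕ => (modCheb t (k + 1)).eval w * z ^ (k + 1) / (k + 1)) ∧
      Complex.exp (-∑' k : ℕ, (modCheb t (k + 1)).eval w * z ^ (k + 1) / (k + 1))
        = 1 + (t : ℂ) * z ^ 2 - z * w :=
  stmt_9_general t w
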